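/- arXiv:1001.1220 — 2 statements merged into one kernel-verified Lean document; each statement's English description precedes it below -/
import Mathlib

section
/- Let γ be a vertex and let ν_1 < ν_2 < ⋯ < ν_r be vertices such that p_{ν_1 γ} = −1 and, for every i = 2, …, r, both p_{ν_i γ} = −1 and p_{ν_i ν_{i−1}} = −1 (that is, ν_1 ≺ ⋯ ≺ ν_r is a chain of r points each proximate to γ). Then d_{ν_r} > r·d_γ. -/
open Matrix Finset

namespace ProxSetting

variable {N : ℕ}

/-- The combinatorial axioms for a proximity matrix. -/
def IsProximityMatrix (P : Matrix (Fin N) (Fin N) ℤ) : Prop :=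
  (∀ μ, P μ μ = 1) ∧
  (∀ μ ν : Fin N, μ < ν → P μ ν = 0) ∧
  (∀ μ ν : Fin N, ν < μ → P μ ν = 0 ∨ P μ ν = -1) ∧
  (∀ μ : Fin N, (∃ ρ, ρ < μ) →
      (Finset.univ.filter fun ν => ν < μ ∧ P μ ν = -1).Nonempty ∧
      (Finset.univ.filter fun ν => ν < μ ∧ P μ ν = -1).card ≤ 2) ∧
  (∀ μ ν ρ : Fin N, ν < ρ → P μ ν = -1 → P μ ρ = -1 → P ρ ν = -1) ∧
  (∀ ν ρ μ₁ μ₂ : Fin N, ν < ρ →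
      P μ₁ ν = -1 → P μ₁ ρ = -1 → P μ₂ ν = -1 → P μ₂ ρ = -1 → μ₁ = μ₂)

/-- `w(ν) = (PᵀP)_{νν}`. -/
def wght (P : Matrix (Fin N) (Fin N) ℤ) (ν : Fin N) : ℤ := (Pᵀ * P) ν ν

/-- The dual graph: distinct `μ, ν` are adjacent iff `(PᵀP)_{μν} = -1`. -/
def graph (P : Matrix (Fin N) (Fin N) ℤ) : SimpleGraph (Fin N) where
  Adj μ ν := μ ≠ ν ∧ (Pᵀ * P) μ ν = -1
  symm := ⟨by
    intro μ ν h
    refine ⟨h.1.symm, ?_⟩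
    have : (Pᵀ * P) ν μ = (Pᵀ * P) μ ν := by
      simp only [Matrix.mul_apply, Matrix.transpose_apply]
      exact Finset.sum_congr rfl fun x _ => mul_comm _ _
    rw [this]; exact h.2⟩
  loopless := ⟨fun μ h => h.1 rfl⟩

instance (P : Matrix (Fin N) (Fin N) ℤ) : DecidableRel (graph P).Adj :=
  fun μ ν => inferInstanceAs (Decidable (μ ≠ ν ∧ (Pᵀ * P) μ ν = -1))

/-- `d* = d̂·Q` where `Q = P⁻¹`. -/
noncomputable def dstar (P : Matrix (Fin N) (Fin N) ℤ) (dh : Fin N → ℤ) (ν : Fin N) : ℤ :=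
  ∑ μ, dh μ * P⁻¹ μ ν

/-- `d = d̂·Q·Qᵀ`. -/
noncomputable def dd (P : Matrix (Fin N) (Fin N) ℤ) (dh : Fin N → ℤ) (ν : Fin N) : ℤ :=
  ∑ ρ, dstar P dh ρ * P⁻¹ ν ρ

/-- `k_ν = Σ_μ q_{νμ}`. -/
noncomputable def kk (P : Matrix (Fin N) (Fin N) ℤ) (ν : Fin N) : ℤ :=
  ∑ μ, P⁻¹ ν μ

/-- `λ(a,ν) = (a + k_ν + 1)/d_ν`. -/
noncomputable def lam (P : Matrix (Fin N) (Fin N) ℤ) (dh : Fin N → ℤ) (a : ℤ) (ν : Fin N) :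
    ℚ :=
  ((a : ℚ) + (kk P ν : ℚ) + 1) / (dd P dh ν : ℚ)

/-- A vector is antinef if every entry of `f·Pᵀ·P` is nonnegative. -/
def Antinef (P : Matrix (Fin N) (Fin N) ℤ) (f : Fin N → ℤ) : Prop :=
  ∀ ν, 0 ≤ ∑ μ, f μ * (Pᵀ * P) μ ν

/-- `ξ_f = min_ν λ(f_ν, ν)`. -/
noncomputable def xiF [NeZero N] (P : Matrix (Fin N) (Fin N) ℤ) (dh : Fin N → ℤ)
    (f : Fin N → ℤ) : ℚ :=
  Finset.univ.inf'
    (Finset.univ_nonempty_iff.mpr ⟨⟨0, Nat.pos_of_ne_zero (NeZero.ne N)⟩⟩)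
    fun ν => lam P dh (f ν) ν

/-- graph distance from a vertex to a set of vertices. -/
noncomputable def distSet (P : Matrix (Fin N) (Fin N) ℤ) (ν : Fin N) (S : Finset (Fin N)) :
    ℕ :=
  sInf {n | ∃ μ ∈ S, (graph P).dist ν μ = n}

/-- `α(γ,ν) = k_ν + 1 − d_ν·(k_γ+1)/d_γ`. -/
noncomputable def alpha (P : Matrix (Fin N) (Fin N) ℤ) (dh : Fin N → ℤ) (γ ν : Fin N) : ℚ :=
  (kk P ν : ℚ) + 1 - (dd P dh ν : ℚ) * ((kk P γ : ℚ) + 1) / (dd P dh γ : ℚ)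

end ProxSetting

open ProxSetting Matrix Finset

section Aux

variable {N : ℕ} {P : Matrix (Fin N) (Fin N) ℤ} {dh : Fin N → ℤ}

lemma prox_det_one (hP : IsProximityMatrix P) : P.det = 1 := by
  have h : Pᵀ.BlockTriangular id := fun i j hij => hP.2.1 j i hij
  rw [← Matrix.det_transpose, Matrix.det_of_upperTriangular h]
  simp [Matrix.transpose_apply, hP.1]

lemma prox_dd_mul_P (hP : IsProximityMatrix P) (μ : Fin N) :
    ∑ τ, dd P dh τ * P μ τ = dstar P dh μ := by
  have hdet : IsUnit P.det := by rw [prox_det_one hP]; exact isUnit_one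
  have hinv : P * P⁻¹ = 1 := Matrix.mul_nonsing_inv P hdet
  calc ∑ τ, dd P dh τ * P μ τ
      = ∑ τ, ∑ ρ, dstar P dh ρ * (P⁻¹ τ ρ * P μ τ) := by
        simp [dd, Finset.sum_mul, mul_assoc]
    _ = ∑ ρ, dstar P dh ρ * ∑ τ, P μ τ * P⁻¹ τ ρ := by
        rw [Finset.sum_comm]
        refine Finset.sum_congr rfl fun ρ _ => ?_
        rw [Finset.mul_sum]
        exact Finset.sum_congr rfl fun τ _ => by ring
    _ = ∑ ρ, dstar P dh ρ * (P * P⁻¹) μ ρ := by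
        simp [Matrix.mul_apply]
    _ = dstar P dh μ := by
        rw [hinv]
        simp [Matrix.one_apply]

lemma prox_term_nonpos (hP : IsProximityMatrix P) {μ τ : Fin N} (hne : τ ≠ μ)
    (hpos : 0 ≤ dd P dh τ) : dd P dh τ * P μ τ ≤ 0 := by
  rcases lt_or_gt_of_ne hne with h | h
  · rcases hP.2.2.1 μ τ h with h0 | h0 <;> rw [h0]
    · simp
    · linarith
  · rw [hP.2.1 μ τ h]; simp

lemma prox_dd_pos (hP : IsProximityMatrix P) (hds : ∀ ν, 0 < dstar P dh ν) :
    ∀ ν, 0 < dd P dh ν := by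
  have main : ∀ n : ℕ, ∀ ν : Fin N, (ν : ℕ) = n → 0 < dd P dh ν := by
    intro n
    induction n using Nat.strong_induction_on with
    | _ n IH =>
      intro ν hν
      have hkey := prox_dd_mul_P (dh := dh) hP ν
      have hsplit : ∑ τ ∈ Finset.univ \ {ν}, dd P dh τ * P ν τ
          + ∑ τ ∈ ({ν} : Finset (Fin N)), dd P dh τ * P ν τ
          = ∑ τ, dd P dh τ * P ν τ :=
        Finset.sum_sdiff (Finset.subset_univ _)
      have hone : ∑ τ ∈ ({ν} : Finset (Fin N)), dd P dh τ * P ν τ = dd P dh ν := by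
        simp [hP.1 ν]
      have hnonpos : ∑ τ ∈ Finset.univ \ {ν}, dd P dh τ * P ν τ ≤ 0 := by
        refine Finset.sum_nonpos fun τ hτ => ?_
        have hne : τ ≠ ν := by
          simpa using (Finset.mem_sdiff.mp hτ).2
        rcases lt_or_gt_of_ne hne with h | h
        · have hτpos : 0 < dd P dh τ := IH (τ : ℕ) (by omega) τ rfl
          exact prox_term_nonpos hP hne hτpos.le
        · rw [hP.2.1 ν τ h]; simp
      have := hds ν
      linarith
  intro ν; exact main (ν : ℕ) ν rfl

lemma prox_ne_of_prox (hP : IsProximityMatrix P) {μ γ : Fin N} (h : P μ γ = -1) :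
    μ ≠ γ := by
  intro e; rw [e, hP.1 γ] at h; norm_num at h

lemma prox_dd_chain1 (hP : IsProximityMatrix P) (hds : ∀ ν, 0 < dstar P dh ν)
    {μ γ : Fin N} (h : P μ γ = -1) : dd P dh γ < dd P dh μ := by
  have hpos := prox_dd_pos hP hds
  have hμγ : μ ≠ γ := prox_ne_of_prox hP h
  have hkey := prox_dd_mul_P (dh := dh) hP μ
  have hsub : ({μ, γ} : Finset (Fin N)) ⊆ Finset.univ := Finset.subset_univ _
  have hsplit := Finset.sum_sdiff (f := fun τ => dd P dh τ * P μ τ) hsub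
  have hone : ∑ τ ∈ ({μ, γ} : Finset (Fin N)), dd P dh τ * P μ τ
      = dd P dh μ - dd P dh γ := by
    rw [Finset.sum_insert (by simpa using hμγ), Finset.sum_singleton, hP.1 μ, h]
    ring
  have hnonpos : ∑ τ ∈ Finset.univ \ ({μ, γ} : Finset (Fin N)), dd P dh τ * P μ τ ≤ 0 := by
    refine Finset.sum_nonpos fun τ hτ => ?_
    have hne : τ ≠ μ := by
      have := (Finset.mem_sdiff.mp hτ).2
      simp at this; exact this.1
    exact prox_term_nonpos hP hne (hpos τ).le
  have := hds μ
  linarith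

lemma prox_dd_chain2 (hP : IsProximityMatrix P) (hds : ∀ ν, 0 < dstar P dh ν)
    {μ γ ρ : Fin N} (hne : γ ≠ ρ) (h1 : P μ γ = -1) (h2 : P μ ρ = -1) :
    dd P dh γ + dd P dh ρ < dd P dh μ := by
  have hpos := prox_dd_pos hP hds
  have hμγ : μ ≠ γ := prox_ne_of_prox hP h1
  have hμρ : μ ≠ ρ := prox_ne_of_prox hP h2
  have hkey := prox_dd_mul_P (dh := dh) hP μ
  have hsub : ({μ, γ, ρ} : Finset (Fin N)) ⊆ Finset.univ := Finset.subset_univ _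
  have hsplit := Finset.sum_sdiff (f := fun τ => dd P dh τ * P μ τ) hsub
  have hone : ∑ τ ∈ ({μ, γ, ρ} : Finset (Fin N)), dd P dh τ * P μ τ
      = dd P dh μ - dd P dh γ - dd P dh ρ := by
    rw [Finset.sum_insert (by simp [hμγ, hμρ]),
      Finset.sum_insert (by simpa using hne), Finset.sum_singleton,
      hP.1 μ, h1, h2]
    ring
  have hnonpos : ∑ τ ∈ Finset.univ \ ({μ, γ, ρ} : Finset (Fin N)), dd P dh τ * P μ τ ≤ 0 := by
    refine Finset.sum_nonpos fun τ hτ => ?_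
    have hne' : τ ≠ μ := by
      have := (Finset.mem_sdiff.mp hτ).2
      simp at this; exact this.1
    exact prox_term_nonpos hP hne' (hpos τ).le
  have := hds μ
  linarith

end Aux

/-- Lemma 4.8: if `ν_1 ≺ ⋯ ≺ ν_r` is a chain of `r` points each proximate to `γ`,
then `d_{ν_r} > r·d_γ`. -/
theorem statement_15 {N : ℕ} (P : Matrix (Fin N) (Fin N) ℤ)
    (hP : IsProximityMatrix P)
    (dh : Fin N → ℤ) (hdh : ∀ ν, 0 ≤ dh ν) (hds : ∀ ν, 0 < dstar P dh ν)
    (γ : Fin N) (r : ℕ) (hr : 0 < r) (ν : Fin r → Fin N) (hmono : StrictMono ν)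
    (hprox : ∀ i, P (ν i) γ = -1)
    (hchain : ∀ i j : Fin r, (j : ℕ) = (i : ℕ) + 1 → P (ν j) (ν i) = -1) :
    (r : ℤ) * dd P dh γ < dd P dh (ν ⟨r - 1, Nat.sub_lt hr Nat.one_pos⟩) := by
  have main : ∀ i : ℕ, ∀ h : i < r, ((i : ℤ) + 1) * dd P dh γ < dd P dh (ν ⟨i, h⟩) := by
    intro i
    induction i with
    | zero =>
      intro h
      simpa using prox_dd_chain1 hP hds (hprox ⟨0, h⟩)
    | succ n IH =>
      intro h
      have hn : n < r := Nat.lt_of_succ_lt h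
      have hc : P (ν ⟨n + 1, h⟩) (ν ⟨n, hn⟩) = -1 := hchain ⟨n, hn⟩ ⟨n + 1, h⟩ rfl
      have hγν : γ ≠ ν ⟨n, hn⟩ := fun e => prox_ne_of_prox hP (hprox ⟨n, hn⟩) (by rw [← e])
      have h2 := prox_dd_chain2 hP hds hγν (hprox ⟨n + 1, h⟩) hc
      have IH' := IH hn
      push_cast
      linarith
  have hlt : r - 1 < r := Nat.sub_lt hr Nat.one_pos
  have := main (r - 1) hlt
  have hcast : ((r - 1 : ℕ) : ℤ) + 1 = (r : ℤ) := by omega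
  rw [hcast] at this
  exact this
end

section
/- Let γ be a vertex with v(γ) + d̂_γ ≥ 3, where v(γ) is the number of vertices adjacent to γ in Γ. Then d_γ − k_γ ≥ 2. -/
open Matrix Finset

open ProxSetting Matrix Finset


namespace ProxAux

open ProxSetting Matrix Finset

variable {N : ℕ} {P : Matrix (Fin N) (Fin N) ℤ}

def IsPM (P : Matrix (Fin N) (Fin N) ℤ) : Prop :=
  (∀ μ, P μ μ = 1) ∧
  (∀ μ ν : Fin N, μ < ν → P μ ν = 0) ∧
  (∀ μ ν : Fin N, ν < μ → P μ ν = 0 ∨ P μ ν = -1)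

lemma E_upper (hP : IsPM P) {μ ν : Fin N} (h : μ ≤ ν) : (1 - P) μ ν = 0 := by
  rcases eq_or_lt_of_le h with rfl | h
  · simp [Matrix.sub_apply, Matrix.one_apply, hP.1 μ]
  · simp [Matrix.sub_apply, Matrix.one_apply, h.ne, hP.2.1 μ ν h]

lemma E_nonneg (hP : IsPM P) (μ ν : Fin N) : 0 ≤ (1 - P) μ ν := by
  rcases lt_trichotomy μ ν with h | rfl | h
  · rw [E_upper hP h.le]
  · rw [E_upper hP le_rfl]
  · rcases hP.2.2 μ ν h with h' | h' <;>
      simp [Matrix.sub_apply, Matrix.one_apply, (ne_of_gt h : μ ≠ ν), h']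

lemma E_eq_one (hP : IsPM P) {μ ν : Fin N} (h : P μ ν = -1) : (1 - P) μ ν = 1 := by
  have hne : μ ≠ ν := by rintro rfl; rw [hP.1 μ] at h; omega
  simp [Matrix.sub_apply, Matrix.one_apply, hne, h]

lemma Epow_nonneg (hP : IsPM P) (k : ℕ) (μ ν : Fin N) : 0 ≤ ((1 - P) ^ k) μ ν := by
  induction k generalizing μ ν with
  | zero => simp [Matrix.one_apply]; positivity
  | succ k ih =>
    rw [pow_succ, Matrix.mul_apply]
    exact Finset.sum_nonneg fun ρ _ => mul_nonneg (ih μ ρ) (E_nonneg hP ρ ν)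

lemma Epow_zero_of_lt (hP : IsPM P) : ∀ (k : ℕ) (μ ν : Fin N),
    (μ : ℕ) < (ν : ℕ) + k → ((1 - P) ^ k) μ ν = 0 := by
  intro k
  induction k with
  | zero =>
    intro μ ν h
    simp only [pow_zero, Matrix.one_apply]
    have : μ ≠ ν := by intro e; subst e; omega
    simp [this]
  | succ k ih =>
    intro μ ν h
    rw [pow_succ', Matrix.mul_apply]
    refine Finset.sum_eq_zero fun ρ _ => ?_
    rcases le_or_gt μ ρ with hρ | hρ
    · rw [E_upper hP hρ, zero_mul]
    · rw [ih ρ ν (by have := hρ; omega), mul_zero]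

lemma Epow_N (hP : IsPM P) : (1 - P) ^ N = 0 := by
  ext μ ν
  rw [Epow_zero_of_lt hP N μ ν (by omega)]
  simp

lemma P_mul_S (hP : IsPM P) : P * (∑ i ∈ range N, (1 - P) ^ i) = 1 := by
  have h := mul_geom_sum (1 - P) N
  rw [Epow_N hP] at h
  have h2 : (1 - P - 1 : Matrix (Fin N) (Fin N) ℤ) = -P := by abel
  rw [h2, neg_mul, zero_sub] at h
  exact neg_injective h

lemma Pinv_eq (hP : IsPM P) : P⁻¹ = ∑ i ∈ range N, (1 - P) ^ i :=
  inv_eq_right_inv (P_mul_S hP)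

lemma Q_mul_P (hP : IsPM P) : P⁻¹ * P = 1 := by
  rw [Pinv_eq hP]; exact mul_eq_one_comm.mp (P_mul_S hP)

lemma Q_nonneg (hP : IsPM P) (μ ν : Fin N) : 0 ≤ P⁻¹ μ ν := by
  rw [Pinv_eq hP]
  rw [Matrix.sum_apply]
  exact Finset.sum_nonneg fun i _ => Epow_nonneg hP i μ ν

lemma Q_diag (hP : IsPM P) (μ : Fin N) : P⁻¹ μ μ = 1 := by
  rw [Pinv_eq hP, Matrix.sum_apply]
  have hN : 0 < N := μ.pos
  rw [Finset.sum_eq_single 0]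
  · simp [Matrix.one_apply]
  · intro i hi hne
    exact Epow_zero_of_lt hP i μ μ (by omega)
  · intro h; simp [Finset.mem_range, hN] at h

lemma Q_ge_pow (hP : IsPM P) {k : ℕ} (hk : k < N) (μ ν : Fin N) :
    ((1 - P) ^ k) μ ν ≤ P⁻¹ μ ν := by
  rw [Pinv_eq hP, Matrix.sum_apply]
  exact Finset.single_le_sum (fun i _ => Epow_nonneg hP i μ ν) (Finset.mem_range.mpr hk)

lemma Q_ge_one (hP : IsPM P) {μ ν : Fin N} (h : P μ ν = -1) : 1 ≤ P⁻¹ μ ν := by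
  have hlt : ν < μ := by
    rcases lt_trichotomy μ ν with h' | h' | h'
    · rw [hP.2.1 μ ν h'] at h; omega
    · rw [h', hP.1 ν] at h; omega
    · exact h'
  have h1 : (1 : ℕ) < N := by have := hlt; have := μ.2; omega
  calc (1 : ℤ) = ((1 - P) ^ 1 : Matrix (Fin N) (Fin N) ℤ) μ ν := by
        rw [pow_one, E_eq_one hP h]
    _ ≤ P⁻¹ μ ν := Q_ge_pow hP h1 μ ν

lemma Q_ge_two (hP : IsPM P) {μ ν ρ : Fin N} (h1 : P μ ρ = -1) (h2 : P ρ ν = -1)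
    (h3 : P μ ν = -1) : 2 ≤ P⁻¹ μ ν := by
  have hρμ : ρ < μ := by
    rcases lt_trichotomy μ ρ with h' | h' | h'
    · rw [hP.2.1 μ ρ h'] at h1; omega
    · rw [h', hP.1 ρ] at h1; omega
    · exact h'
  have hνρ : ν < ρ := by
    rcases lt_trichotomy ρ ν with h' | h' | h'
    · rw [hP.2.1 ρ ν h'] at h2; omega
    · rw [h', hP.1 ν] at h2; omega
    · exact h'
  have h2N : (2 : ℕ) < N := by have := μ.2; omega
  have hE2 : 2 ≤ ((1 - P) ^ 1 : Matrix (Fin N) (Fin N) ℤ) μ ν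
      + ((1 - P) ^ 2 : Matrix (Fin N) (Fin N) ℤ) μ ν := by
    have e1 : ((1 - P) ^ 1 : Matrix (Fin N) (Fin N) ℤ) μ ν = 1 := by
      rw [pow_one, E_eq_one hP h3]
    have e2 : (1 : ℤ) ≤ ((1 - P) ^ 2 : Matrix (Fin N) (Fin N) ℤ) μ ν := by
      rw [pow_two, Matrix.mul_apply]
      calc (1 : ℤ) = (1 - P) μ ρ * (1 - P) ρ ν := by
            rw [E_eq_one hP h1, E_eq_one hP h2]; ring
        _ ≤ ∑ x, (1 - P) μ x * (1 - P) x ν :=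
            Finset.single_le_sum
              (fun x _ => mul_nonneg (E_nonneg hP μ x) (E_nonneg hP x ν))
              (Finset.mem_univ ρ)
    omega
  calc (2 : ℤ) ≤ ((1 - P) ^ 1 : Matrix (Fin N) (Fin N) ℤ) μ ν
      + ((1 - P) ^ 2 : Matrix (Fin N) (Fin N) ℤ) μ ν := hE2
    _ ≤ ∑ i ∈ {1, 2}, ((1 - P) ^ i) μ ν := by
        rw [Finset.sum_pair (by norm_num)]
    _ ≤ ∑ i ∈ range N, ((1 - P) ^ i) μ ν := by
        refine Finset.sum_le_sum_of_subset_of_nonneg ?_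
          (fun i _ _ => Epow_nonneg hP i μ ν)
        intro i hi
        simp only [Finset.mem_insert, Finset.mem_singleton] at hi
        rcases hi with rfl | rfl <;> simp [Finset.mem_range] <;> omega
    _ = P⁻¹ μ ν := by rw [Pinv_eq hP, Matrix.sum_apply]

lemma dh_eq (hP : IsPM P) (dh : Fin N → ℤ) (ρ : Fin N) :
    ∑ ν, dstar P dh ν * P ν ρ = dh ρ := by
  simp only [dstar, Finset.sum_mul]
  rw [Finset.sum_comm]
  simp only [mul_assoc, ← Finset.mul_sum, ← Matrix.mul_apply, Q_mul_P hP]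
  simp [Matrix.one_apply]

lemma dstar_eq (hP : IsPM P) (dh : Fin N → ℤ) (ρ : Fin N) :
    dstar P dh ρ = dh ρ + ∑ ν ∈ univ.filter (fun ν => P ν ρ = -1), dstar P dh ν := by
  have key : ∀ ν : Fin N, dstar P dh ν * P ν ρ =
      (if ν = ρ then dstar P dh ν else 0) - (if P ν ρ = -1 then dstar P dh ν else 0) := by
    intro ν
    rcases lt_trichotomy ν ρ with h | rfl | h
    · rw [hP.2.1 ν ρ h]
      simp [h.ne]
    · rw [hP.1 ν]; norm_num
    · rcases hP.2.2 ν ρ h with h' | h' <;> simp [h', h.ne']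
  have h1 := dh_eq hP dh ρ
  rw [Finset.sum_congr rfl (fun ν _ => key ν), Finset.sum_sub_distrib,
    Finset.sum_ite_eq' univ ρ, Finset.sum_ite, Finset.sum_const_zero] at h1
  simp only [Finset.mem_univ, if_true, add_zero] at h1
  omega

lemma dstar_ge_sum (hP : IsPM P) {dh : Fin N → ℤ} (hdh : ∀ ν, 0 ≤ dh ν)
    (hds : ∀ ν, 0 < dstar P dh ν) {ρ : Fin N} {S : Finset (Fin N)}
    (hS : ∀ ν ∈ S, P ν ρ = -1) :
    dh ρ + ∑ ν ∈ S, dstar P dh ν ≤ dstar P dh ρ := by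
  rw [dstar_eq hP dh ρ]
  have hsub : S ⊆ univ.filter (fun ν => P ν ρ = -1) := fun ν hν =>
    Finset.mem_filter.mpr ⟨Finset.mem_univ ν, hS ν hν⟩
  have := Finset.sum_le_sum_of_subset_of_nonneg hsub
    (fun ν _ _ => (hds ν).le)
  omega

lemma dstar_ge_card (hP : IsPM P) {dh : Fin N → ℤ}
    (hds : ∀ ν, 0 < dstar P dh ν) (γ : Fin N) :
    dh γ + ((univ.filter (fun ν => P ν γ = -1)).card : ℤ) ≤ dstar P dh γ := by
  rw [dstar_eq hP dh γ]
  have : ((univ.filter (fun ν => P ν γ = -1)).card : ℤ)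
      ≤ ∑ ν ∈ univ.filter (fun ν => P ν γ = -1), dstar P dh ν := by
    calc ((univ.filter (fun ν => P ν γ = -1)).card : ℤ)
        = ∑ _ν ∈ univ.filter (fun ν => P ν γ = -1), (1 : ℤ) := by
          rw [Finset.sum_const, nsmul_eq_mul, mul_one]
      _ ≤ ∑ ν ∈ univ.filter (fun ν => P ν γ = -1), dstar P dh ν :=
          Finset.sum_le_sum fun ν _ => hds ν
  omega

lemma neigh_low (hP : IsPM P) {γ ν : Fin N} (hlt : ν < γ)
    (h : ∑ ρ, P ρ γ * P ρ ν = -1) : P γ ν = -1 := by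
  have hsplit := Finset.add_sum_erase univ (fun ρ => P ρ γ * P ρ ν) (Finset.mem_univ γ)
  have hnn : 0 ≤ ∑ ρ ∈ univ.erase γ, P ρ γ * P ρ ν := by
    refine Finset.sum_nonneg fun ρ hρ => ?_
    have hne : ρ ≠ γ := (Finset.mem_erase.mp hρ).1
    rcases lt_trichotomy ρ γ with h' | h' | h'
    · rw [hP.2.1 ρ γ h', zero_mul]
    · exact absurd h' hne
    · have a1 : P ρ γ ≤ 0 := by rcases hP.2.2 ρ γ h' with h'' | h'' <;> omega
      have a2 : P ρ ν ≤ 0 := by rcases hP.2.2 ρ ν (hlt.trans h') with h'' | h'' <;> omega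
      nlinarith
  simp only [hP.1 γ, one_mul] at hsplit
  rcases hP.2.2 γ ν hlt with h' | h' <;> omega

lemma adj_low (hP : IsPM P) {γ ν : Fin N} (hlt : ν < γ)
    (h : (graph P).Adj γ ν) : P γ ν = -1 := by
  have h2 := h.2
  rw [Matrix.mul_apply] at h2
  simp only [Matrix.transpose_apply] at h2
  exact neigh_low hP hlt h2

lemma adj_high (hP : IsPM P) {γ ν : Fin N} (hlt : γ < ν)
    (h : (graph P).Adj γ ν) : P ν γ = -1 := by
  have h2 := h.2
  rw [Matrix.mul_apply] at h2
  simp only [Matrix.transpose_apply] at h2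
  have h3 : ∑ ρ, P ρ ν * P ρ γ = -1 := by
    rw [← h2]; exact Finset.sum_congr rfl fun ρ _ => mul_comm _ _
  exact neigh_low hP hlt h3

end ProxAux

/-- Lemma 4.9 b): if `v(γ) + d̂_γ ≥ 3` then `d_γ − k_γ ≥ 2`. -/
theorem statement_17 {N : ℕ} (P : Matrix (Fin N) (Fin N) ℤ)
    (hP : IsProximityMatrix P)
    (dh : Fin N → ℤ) (hdh : ∀ ν, 0 ≤ dh ν) (hds : ∀ ν, 0 < dstar P dh ν)
    (γ : Fin N) (hγ : 3 ≤ ((graph P).degree γ : ℤ) + dh γ) :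
    2 ≤ dd P dh γ - kk P γ := by
  classical
  have hpm : ProxAux.IsPM P := ⟨hP.1, hP.2.1, hP.2.2.1⟩
  have hds1 : ∀ ρ, 1 ≤ dstar P dh ρ := fun ρ => hds ρ
  have hdk : dd P dh γ - kk P γ = ∑ ρ, (dstar P dh ρ - 1) * P⁻¹ γ ρ := by
    simp only [dd, kk, sub_mul, one_mul]
    rw [Finset.sum_sub_distrib]
  have hterm : ∀ ρ : Fin N, 0 ≤ (dstar P dh ρ - 1) * P⁻¹ γ ρ := fun ρ =>
    mul_nonneg (by have := hds1 ρ; omega) (ProxAux.Q_nonneg hpm γ ρ)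
  set A := univ.filter (fun ν => (graph P).Adj γ ν ∧ γ < ν) with hAdef
  set B := univ.filter (fun ν => (graph P).Adj γ ν ∧ ν < γ) with hBdef
  -- degree bound
  have hdeg_eq : (graph P).degree γ = (univ.filter (fun ν => (graph P).Adj γ ν)).card := by
    rw [← SimpleGraph.neighborFinset_eq_filter]
    rfl
  have hsub : univ.filter (fun ν => (graph P).Adj γ ν) ⊆ A ∪ B := by
    intro ν hν
    have hadj : (graph P).Adj γ ν := (Finset.mem_filter.mp hν).2
    rcases lt_trichotomy γ ν with h | h | h
    · exact Finset.mem_union_left _ (Finset.mem_filter.mpr ⟨Finset.mem_univ _, hadj, h⟩)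
    · exact absurd h hadj.1
    · exact Finset.mem_union_right _ (Finset.mem_filter.mpr ⟨Finset.mem_univ _, hadj, h⟩)
  have hdeg : (graph P).degree γ ≤ A.card + B.card := by
    rw [hdeg_eq]
    exact (Finset.card_le_card hsub).trans (Finset.card_union_le _ _)
  -- A.card bound feeds into dstar γ
  have hAsub : A ⊆ univ.filter (fun ν => P ν γ = -1) := by
    intro ν hν
    obtain ⟨-, hadj, hlt⟩ := Finset.mem_filter.mp hν
    exact Finset.mem_filter.mpr ⟨Finset.mem_univ _, ProxAux.adj_high hpm hlt hadj⟩
  have hdsγ : dh γ + (A.card : ℤ) ≤ dstar P dh γ := by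
    have h1 := ProxAux.dstar_ge_card hpm hds γ
    have h2 : (A.card : ℤ) ≤ ((univ.filter (fun ν => P ν γ = -1)).card : ℤ) := by
      exact_mod_cast Finset.card_le_card hAsub
    omega
  -- B.card ≤ 2
  have hBlow : ∀ ν ∈ B, ν < γ ∧ P γ ν = -1 := by
    intro ν hν
    obtain ⟨-, hadj, hlt⟩ := Finset.mem_filter.mp hν
    exact ⟨hlt, ProxAux.adj_low hpm hlt hadj⟩
  have hBcard : B.card ≤ 2 := by
    rcases B.eq_empty_or_nonempty with he | ⟨ν, hν⟩
    · rw [he]; simp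
    · obtain ⟨hlt, -⟩ := hBlow ν hν
      have h4 := (hP.2.2.2.1 γ ⟨ν, hlt⟩).2
      refine (Finset.card_le_card ?_).trans h4
      intro μ hμ
      obtain ⟨hlt', hp'⟩ := hBlow μ hμ
      exact Finset.mem_filter.mpr ⟨Finset.mem_univ _, hlt', hp'⟩
  rw [hdk]
  have hb3 : B.card = 0 ∨ B.card = 1 ∨ B.card = 2 := by omega
  rcases hb3 with hb | hb | hb
  · -- no below-neighbors : dstar γ ≥ 3
    have hA3 : 3 ≤ dh γ + (A.card : ℤ) := by
      have := hdeg; omega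
    have h3 : 3 ≤ dstar P dh γ := le_trans hA3 hdsγ
    calc (2 : ℤ) ≤ (dstar P dh γ - 1) * P⁻¹ γ γ := by
          rw [ProxAux.Q_diag hpm γ, mul_one]; omega
      _ ≤ ∑ ρ, (dstar P dh ρ - 1) * P⁻¹ γ ρ :=
          Finset.single_le_sum (fun ρ _ => hterm ρ) (Finset.mem_univ γ)
  · -- one below-neighbor
    obtain ⟨ν, hBν⟩ := Finset.card_eq_one.mp hb
    have hνB : ν ∈ B := by rw [hBν]; exact Finset.mem_singleton_self ν
    obtain ⟨hlt, hp⟩ := hBlow ν hνB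
    have h2γ : 2 ≤ dstar P dh γ := by
      have : 2 ≤ dh γ + (A.card : ℤ) := by have := hdeg; omega
      omega
    have h2ν : 2 ≤ dstar P dh ν := by
      have := ProxAux.dstar_ge_sum hpm hdh hds (ρ := ν) (S := {γ})
        (by intro μ hμ; rw [Finset.mem_singleton] at hμ; subst hμ; exact hp)
      rw [Finset.sum_singleton] at this
      have := hdh ν; omega
    have hQν : 1 ≤ P⁻¹ γ ν := ProxAux.Q_ge_one hpm hp
    calc (2 : ℤ) ≤ (dstar P dh γ - 1) * P⁻¹ γ γ + (dstar P dh ν - 1) * P⁻¹ γ ν := by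
          rw [ProxAux.Q_diag hpm γ, mul_one]
          have : (1 : ℤ) * 1 ≤ (dstar P dh ν - 1) * P⁻¹ γ ν := by
            apply mul_le_mul (by omega) hQν (by norm_num) (by omega)
          omega
      _ = ∑ ρ ∈ ({γ, ν} : Finset (Fin N)), (dstar P dh ρ - 1) * P⁻¹ γ ρ := by
          rw [Finset.sum_pair (by exact fun h => absurd h.symm hlt.ne)]
      _ ≤ ∑ ρ, (dstar P dh ρ - 1) * P⁻¹ γ ρ :=
          Finset.sum_le_sum_of_subset_of_nonneg (Finset.subset_univ _)
            (fun ρ _ _ => hterm ρ)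
  · -- two below-neighbors
    obtain ⟨x, y, hxy, hBxy⟩ := Finset.card_eq_two.mp hb
    have hxB : x ∈ B := by rw [hBxy]; exact Finset.mem_insert_self _ _
    have hyB : y ∈ B := by rw [hBxy]; exact Finset.mem_insert_of_mem (Finset.mem_singleton_self _)
    obtain ⟨hxlt, hpx⟩ := hBlow x hxB
    obtain ⟨hylt, hpy⟩ := hBlow y hyB
    -- wlog ν₁ < ν₂
    obtain ⟨ν₁, ν₂, h12, hp1, hp2, h1γ⟩ :
        ∃ ν₁ ν₂ : Fin N, ν₁ < ν₂ ∧ P γ ν₁ = -1 ∧ P γ ν₂ = -1 ∧ ν₂ < γ := by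
      rcases lt_or_gt_of_ne hxy with h | h
      · exact ⟨x, y, h, hpx, hpy, hylt⟩
      · exact ⟨y, x, h, hpy, hpx, hxlt⟩
    have hchain : P ν₂ ν₁ = -1 := hP.2.2.2.2.1 γ ν₁ ν₂ h12 hp1 hp2
    have hQ2 : 2 ≤ P⁻¹ γ ν₁ := ProxAux.Q_ge_two hpm hp2 hchain hp1
    have h2ν₁ : 2 ≤ dstar P dh ν₁ := by
      have hs := ProxAux.dstar_ge_sum hpm hdh hds (ρ := ν₁) (S := {γ, ν₂})
        (by
          intro μ hμ
          rcases Finset.mem_insert.mp hμ with rfl | hμ'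
          · exact hp1
          · rw [Finset.mem_singleton] at hμ'; subst hμ'; exact hchain)
      rw [Finset.sum_pair (by exact fun h => absurd h h1γ.ne')] at hs
      have := hdh ν₁; have := hds1 γ; have := hds1 ν₂; omega
    calc (2 : ℤ) ≤ (dstar P dh ν₁ - 1) * P⁻¹ γ ν₁ := by
          have : (1 : ℤ) * 2 ≤ (dstar P dh ν₁ - 1) * P⁻¹ γ ν₁ :=
            mul_le_mul (by omega) hQ2 (by norm_num) (by omega)
          omega
      _ ≤ ∑ ρ, (dstar P dh ρ - 1) * P⁻¹ γ ρ :=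
          Finset.single_le_sum (fun ρ _ => hterm ρ) (Finset.mem_univ ν₁)
end
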